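/- arXiv:2202.13088 — 3 statements merged into one kernel-verified Lean document; each statement's English description precedes it below -/
import Mathlib

section
/- Let Δ ≥ 2 and δ ≤ 2Δ² be positive integers, and let 0 < x ≤ 1 be a real number with d := ⌈Δ^x⌉ ≥ 2. Then k := ⌈log_d δ⌉ · (d − 1) + 1 satisfies k ≤ (2/x + 2) · Δ^x. -/
open Real

/-- Key x-free inequality: for `d ≥ 2` an integer and `d-1 ≤ D ≤ d`, `1 ≤ D`,
`(log 2 + 2 log D)/log d * (d-1) + d ≤ 4D`. -/
lemma claimA_aux (d : ℕ) (hd2 : 2 ≤ d) (D : ℝ) (hD1 : 1 ≤ D)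
    (h1 : (d : ℝ) - 1 ≤ D) (h2 : D ≤ d) :
    (Real.log 2 + 2 * Real.log D) / Real.log d * ((d : ℝ) - 1) + (d : ℝ) ≤ 4 * D := by
  have hD0 : (0:ℝ) < D := by linarith
  have hd1 : (1:ℝ) < d := by exact_mod_cast hd2
  have hld : 0 < Real.log d := Real.log_pos hd1
  have hlD0 : 0 ≤ Real.log D := Real.log_nonneg hD1
  have hlDd : Real.log D ≤ Real.log d := Real.log_le_log hD0 h2
  rcases Nat.lt_or_ge d 4 with h4 | h4
  · interval_cases d
    · -- d = 2
      have hD2 : D ≤ 2 := by exact_mod_cast h2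
      have hl2 : (0.6931471803 : ℝ) < Real.log 2 := Real.log_two_gt_d9
      have hsub : Real.log D ≤ D - 1 := Real.log_le_sub_one_of_pos hD0
      have hlog2 : (0:ℝ) < Real.log 2 := Real.log_pos one_lt_two
      have key : Real.log 2 + 2 * Real.log D ≤ (4 * D - 2) * Real.log 2 := by
        have h43 : (1:ℝ) ≤ 4 * D - 3 := by linarith
        nlinarith [mul_le_mul_of_nonneg_right h43 hlog2.le]
      have : (Real.log 2 + 2 * Real.log D) / Real.log 2 ≤ 4 * D - 2 := by
        rw [div_le_iff₀ hlog2]; linarith [key]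
      push_cast
      norm_num
      linarith [this]
    · -- d = 3
      have hD2 : (2:ℝ) ≤ D := by push_cast at h1; linarith
      have hl3 : Real.log (3:ℕ) = Real.log 3 := by norm_num
      rcases le_total D (21/10 : ℝ) with hc | hc
      · -- D ≤ 2.1
        have hlD : Real.log D ≤ Real.log (21/10) :=
          Real.log_le_log hD0 hc
        have hkey : 2 * (Real.log 2 + 2 * Real.log (21/10)) ≤ 5 * Real.log 3 := by
          have e1 : 2 * (Real.log 2 + 2 * Real.log (21/10)) =
              Real.log ((2 * (21/10)^2)^2) := by
            rw [Real.log_pow, Real.log_mul (by norm_num) (by positivity),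
              Real.log_pow]
            push_cast; ring
          have e2 : (5:ℝ) * Real.log 3 = Real.log (3^5) := by
            rw [Real.log_pow]; push_cast; ring
          rw [e1, e2]
          exact Real.log_le_log (by positivity) (by norm_num)
        have hquot : (Real.log 2 + 2 * Real.log D) / Real.log 3 * 2 ≤ 5 := by
          rw [mul_comm, ← mul_div_assoc, div_le_iff₀ (Real.log_pos (by norm_num))]
          nlinarith [hkey, hlD]
        push_cast
        have : Real.log ((3:ℕ):ℝ) = Real.log 3 := by norm_num
        nlinarith [hquot]
      · -- 2.1 ≤ D
        have hkey : 10 * Real.log 2 ≤ 7 * Real.log 3 := by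
          have e1 : (10:ℝ) * Real.log 2 = Real.log (2^10) := by
            rw [Real.log_pow]; push_cast; ring
          have e2 : (7:ℝ) * Real.log 3 = Real.log (3^7) := by
            rw [Real.log_pow]; push_cast; ring
          rw [e1, e2]
          exact Real.log_le_log (by positivity) (by norm_num)
        have hl3pos : (0:ℝ) < Real.log 3 := Real.log_pos (by norm_num)
        have hlD3 : Real.log D ≤ Real.log 3 := by
          have : ((3:ℕ):ℝ) = (3:ℝ) := by norm_num
          rw [← this]; exact hlDd
        have hquot : (Real.log 2 + 2 * Real.log D) / Real.log 3 * 2 ≤ 27/5 := by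
          rw [mul_comm, ← mul_div_assoc, div_le_iff₀ hl3pos]
          nlinarith [hkey, hlD3]
        push_cast
        nlinarith [hquot]
  · -- d ≥ 4
    have hd4 : (4:ℝ) ≤ d := by exact_mod_cast h4
    have hl4 : Real.log 4 ≤ Real.log d := Real.log_le_log (by norm_num) hd4
    have h2l2 : Real.log 4 = 2 * Real.log 2 := by
      rw [show (4:ℝ) = 2^2 by norm_num, Real.log_pow]; push_cast; ring
    have hcoef : (Real.log 2 + 2 * Real.log D) / Real.log d ≤ 5/2 := by
      rw [div_le_iff₀ hld]
      nlinarith [hl4, h2l2, hlDd]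
    have hdd1 : (0:ℝ) ≤ (d:ℝ) - 1 := by linarith
    have := mul_le_mul_of_nonneg_right hcoef hdd1
    nlinarith [this]

/-- Bounding the connectivity requirement in the layered reduction: for `Δ ≥ 2`,
`0 < δ ≤ 2Δ²`, `0 < x ≤ 1` and `d = ⌈Δ^x⌉ ≥ 2`, the quantity
`k = ⌈log_d δ⌉·(d−1) + 1` satisfies `k ≤ (2/x + 2)·Δ^x`. -/
theorem connectivity_bound_layered
    (Δ δ : ℕ) (hΔ : 2 ≤ Δ) (hδpos : 0 < δ) (hδ : (δ : ℝ) ≤ 2 * (Δ : ℝ) ^ 2)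
    (x : ℝ) (hx0 : 0 < x) (hx1 : x ≤ 1)
    (d : ℕ) (hd : d = ⌈(Δ : ℝ) ^ x⌉₊) (hd2 : 2 ≤ d)
    (k : ℕ) (hk : k = ⌈Real.logb d δ⌉₊ * (d - 1) + 1) :
    (k : ℝ) ≤ (2 / x + 2) * (Δ : ℝ) ^ x := by
  have hΔR : (2:ℝ) ≤ (Δ:ℝ) := by exact_mod_cast hΔ
  have hΔ0 : (0:ℝ) < (Δ:ℝ) := by linarith
  set D : ℝ := (Δ:ℝ) ^ x with hD
  have hD1 : (1:ℝ) ≤ D := Real.one_le_rpow (by linarith) hx0.le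
  have hD0 : (0:ℝ) < D := by linarith
  have hDd : D ≤ (d:ℝ) := by rw [hd]; exact Nat.le_ceil D
  have hdD : (d:ℝ) - 1 ≤ D := by
    have h := Nat.ceil_lt_add_one (R := ℝ) (a := D) (by linarith)
    rw [hd]; push_cast; linarith [h]
  have hd1 : (1:ℝ) < (d:ℝ) := by exact_mod_cast hd2
  have hld : (0:ℝ) < Real.log d := Real.log_pos hd1
  have hlD : Real.log D = x * Real.log (Δ:ℝ) := Real.log_rpow hΔ0 x
  have hlD0 : (0:ℝ) ≤ Real.log D := Real.log_nonneg hD1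
  have hδ1 : (1:ℝ) ≤ (δ:ℝ) := by exact_mod_cast hδpos
  have hδ0 : (0:ℝ) < (δ:ℝ) := by linarith
  -- bound on logb
  have hL0 : 0 ≤ Real.logb d δ := Real.logb_nonneg hd1 hδ1
  have hLle : Real.logb d δ ≤ (Real.log 2 + 2 * Real.log (Δ:ℝ)) / Real.log d := by
    have h1 : Real.logb d δ ≤ Real.logb d (2 * (Δ:ℝ)^2) :=
      Real.logb_le_logb_of_le hd1 hδ0 hδ
    have h2 : Real.log (2 * (Δ:ℝ)^2) = Real.log 2 + 2 * Real.log (Δ:ℝ) := by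
      rw [Real.log_mul (by norm_num) (by positivity), Real.log_pow]
      push_cast; ring
    calc Real.logb d δ ≤ Real.logb d (2 * (Δ:ℝ)^2) := h1
      _ = (Real.log 2 + 2 * Real.log (Δ:ℝ)) / Real.log d := by
          rw [Real.logb, h2]
  have hm : ((⌈Real.logb d δ⌉₊ : ℕ) : ℝ) ≤ Real.logb d δ + 1 :=
    (Nat.ceil_lt_add_one hL0).le
  have hm0 : (0:ℝ) ≤ ((⌈Real.logb d δ⌉₊ : ℕ) : ℝ) := Nat.cast_nonneg _
  have hdd1 : (0:ℝ) ≤ (d:ℝ) - 1 := by linarith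
  have hkR : (k:ℝ) = ((⌈Real.logb d δ⌉₊ : ℕ) : ℝ) * ((d:ℝ) - 1) + 1 := by
    have hd1' : 1 ≤ d := by omega
    rw [hk]; push_cast [hd1']; ring
  -- claim A
  have hA := claimA_aux d hd2 D hD1 hdD hDd
  -- rewriting 2 log Δ = (2/x) * log D
  have h2B : 2 * Real.log (Δ:ℝ) = (2/x) * Real.log D := by
    rw [hlD]; field_simp
  have hx2 : (2:ℝ) ≤ 2 / x := by
    rw [le_div_iff₀ hx0]; linarith
  -- set t := log D / log d
  have ht0 : (0:ℝ) ≤ Real.log D / Real.log d := by positivity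
  have ht1 : Real.log D / Real.log d ≤ 1 := by
    rw [div_le_one hld]; exact Real.log_le_log hD0 hDd
  have htD : Real.log D / Real.log d * ((d:ℝ) - 1) ≤ D := by
    calc Real.log D / Real.log d * ((d:ℝ) - 1) ≤ 1 * ((d:ℝ) - 1) :=
          mul_le_mul_of_nonneg_right ht1 hdd1
      _ ≤ D := by linarith
  -- split the claimA quotient
  have hsplit : (Real.log 2 + 2 * Real.log D) / Real.log d =
      Real.log 2 / Real.log d + 2 * (Real.log D / Real.log d) := by
    field_simp
  rw [hsplit] at hA
  have hsplit2 : (Real.log 2 + 2 * Real.log (Δ:ℝ)) / Real.log d =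
      Real.log 2 / Real.log d + (2/x) * (Real.log D / Real.log d) := by
    rw [h2B]; field_simp
  rw [hsplit2] at hLle
  -- chain
  have hchain : (k:ℝ) ≤
      (Real.log 2 / Real.log d + (2/x) * (Real.log D / Real.log d) + 1) * ((d:ℝ) - 1) + 1 := by
    rw [hkR]
    have : ((⌈Real.logb d δ⌉₊ : ℕ) : ℝ) ≤
        Real.log 2 / Real.log d + (2/x) * (Real.log D / Real.log d) + 1 := by
      linarith [hm, hLle]
    linarith [mul_le_mul_of_nonneg_right this hdd1]
  -- finish: use hA and slack
  have hmul : (2/x - 2) * (Real.log D / Real.log d * ((d:ℝ) - 1)) ≤ (2/x - 2) * D :=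
    mul_le_mul_of_nonneg_left htD (by linarith)
  linarith [hchain, hA, hmul]
end

section
/- Let k ≥ 2 and let g > 0 be such that s := k²/g is an integer with s ≥ k. Let G be a graph and S a vertex subset with |S| = s spanning at least (k−1)² edges. Then there exists a k-element subset T ⊆ S spanning at least (k(k−1)³·g²)/(k⁴) ≥ g²/2 edges of G, where the last inequality holds for all sufficiently large k (depending on g being at most k). -/
/-!
Double counting: an edge of `S` lies in exactly `(|S| - 2).choose (k - 2)` of the `k`-subsets
of `S`, so a `k`-subset `T` spanning the most edges spans at least the average
`|E(S)| · k(k - 1) / (|S|(|S| - 1))`. With `|E(S)| ≥ (k - 1)²` and `|S|(|S| - 1) ≤ |S|² = k⁴ / g²`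
this is at least `k(k - 1)³g² / k⁴`.
-/

open Finset

namespace Finset

variable {α : Type*} [DecidableEq α]

theorem mem_sym2_iff_toFinset_subset {s : Finset α} {z : Sym2 α} :
    z ∈ s.sym2 ↔ z.toFinset ⊆ s := by
  simp [mem_sym2_iff, subset_iff]

theorem card_filter_powersetCard_mem_sym2 {S : Finset α} {z : Sym2 α} (hzS : z ∈ S.sym2)
    (hz : ¬z.IsDiag) {k : ℕ} (hk : 2 ≤ k) :
    #{T ∈ S.powersetCard k | z ∈ T.sym2} = (#S - 2).choose (k - 2) := by
  simp_rw [mem_sym2_iff_toFinset_subset] at hzS ⊢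
  rw [card_filter_powersetCard_subset _ _ _ hzS (by rwa [Sym2.card_toFinset_of_not_isDiag _ hz]),
    Sym2.card_toFinset_of_not_isDiag _ hz]

variable {S : Finset α} {E : Finset (Sym2 α)} {k : ℕ}

theorem sum_card_filter_mem_sym2_powersetCard (hE : ∀ z ∈ E, z ∈ S.sym2 ∧ ¬z.IsDiag)
    (hk : 2 ≤ k) :
    ∑ T ∈ S.powersetCard k, #{z ∈ E | z ∈ T.sym2} = #E * (#S - 2).choose (k - 2) := by
  calc ∑ T ∈ S.powersetCard k, #{z ∈ E | z ∈ T.sym2}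
      = ∑ z ∈ E, #{T ∈ S.powersetCard k | z ∈ T.sym2} := by
        simpa only [bipartiteAbove, bipartiteBelow] using
          sum_card_bipartiteAbove_eq_sum_card_bipartiteBelow (s := S.powersetCard k) (t := E)
            (r := fun T z ↦ z ∈ T.sym2)
    _ = ∑ _z ∈ E, (#S - 2).choose (k - 2) :=
        sum_congr rfl fun z hz ↦ card_filter_powersetCard_mem_sym2 (hE z hz).1 (hE z hz).2 hk
    _ = #E * (#S - 2).choose (k - 2) := by rw [sum_const, smul_eq_mul]

theorem exists_mem_powersetCard_card_mul_choose_two_le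
    (hE : ∀ z ∈ E, z ∈ S.sym2 ∧ ¬z.IsDiag) (hk : 2 ≤ k) (hkS : k ≤ #S) :
    ∃ T ∈ S.powersetCard k, #E * k.choose 2 ≤ #{z ∈ E | z ∈ T.sym2} * (#S).choose 2 := by
  refine exists_le_of_sum_le (powersetCard_nonempty.mpr hkS) ?_
  rw [sum_const, card_powersetCard, smul_eq_mul, ← sum_mul,
    sum_card_filter_mem_sym2_powersetCard hE hk]
  apply le_of_eq
  calc (#S).choose k * (#E * k.choose 2)
      = #E * ((#S).choose k * k.choose 2) := by ring
    _ = #E * (#S - 2).choose (k - 2) * (#S).choose 2 := by rw [Nat.choose_mul hk]; ring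

end Finset

theorem SimpleGraph.exists_subset_card_edges_mul_choose_two_le {V : Type*} [Fintype V]
    [DecidableEq V] (G : SimpleGraph V) [DecidableRel G.Adj] {S : Finset V} {k : ℕ}
    (hk : 2 ≤ k) (hkS : k ≤ #S) :
    ∃ T ⊆ S, #T = k ∧ #{e ∈ G.edgeFinset | e ∈ S.sym2} * k.choose 2 ≤
      #{e ∈ G.edgeFinset | e ∈ T.sym2} * (#S).choose 2 := by
  have hedges : ∀ e ∈ {e ∈ G.edgeFinset | e ∈ S.sym2}, e ∈ S.sym2 ∧ ¬e.IsDiag := fun e he ↦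
    ⟨(mem_filter.mp he).2, G.not_isDiag_of_mem_edgeSet (mem_edgeFinset.mp (mem_filter.mp he).1)⟩
  obtain ⟨T, hT, hcount⟩ := exists_mem_powersetCard_card_mul_choose_two_le hedges hk hkS
  obtain ⟨hTS, hTk⟩ := mem_powersetCard.mp hT
  refine ⟨T, hTS, hTk, hcount.trans_eq ?_⟩
  rw [filter_filter]
  congr 3
  ext e
  exact and_iff_right_of_imp (fun he ↦ sym2_mono hTS he)

/-- Soundness of the DkS-to-label-cover reduction.  Let `k ≥ 2`, let `g > 0` be such
that `s = k²/g` is an integer with `s ≥ k`, and let `S` be a vertex set of size `s`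
spanning at least `(k−1)²` edges of a graph `G`.  Then some `k`-subset `T ⊆ S` spans
at least `k(k−1)³g²/k⁴` edges, and for sufficiently large `k` (here `k ≥ 5`) this
quantity is at least `g²/2`. -/
theorem dense_subset_exists
    {V : Type*} [Fintype V] [DecidableEq V] (G : SimpleGraph V) [DecidableRel G.Adj]
    (k : ℕ) (hk : 2 ≤ k) (g : ℝ) (hg : 0 < g)
    (s : ℕ) (hs : (s : ℝ) = (k : ℝ) ^ 2 / g) (hsk : k ≤ s)
    (S : Finset V) (hS : S.card = s)
    (hE : ((k : ℝ) - 1) ^ 2 ≤ ((G.edgeFinset.filter (· ∈ S.sym2)).card : ℝ)) :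
    (∃ T ⊆ S, T.card = k ∧
        (k : ℝ) * ((k : ℝ) - 1) ^ 3 * g ^ 2 / (k : ℝ) ^ 4
          ≤ ((G.edgeFinset.filter (· ∈ T.sym2)).card : ℝ))
      ∧ (5 ≤ k → g ^ 2 / 2 ≤ (k : ℝ) * ((k : ℝ) - 1) ^ 3 * g ^ 2 / (k : ℝ) ^ 4) := by
  have hkR : (2 : ℝ) ≤ k := by exact_mod_cast hk
  refine ⟨?_, fun hk5 ↦ ?_⟩
  · obtain ⟨T, hTS, hTk, hcount⟩ :=
      G.exists_subset_card_edges_mul_choose_two_le hk (hS ▸ hsk : k ≤ #S)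
    refine ⟨T, hTS, hTk, ?_⟩
    set n : ℝ := ((G.edgeFinset.filter (· ∈ T.sym2)).card : ℝ)
    have hcountR : ((k : ℝ) - 1) ^ 2 * (k * (k - 1) / 2) ≤ n * (s * (s - 1) / 2) := by
      have := (Nat.cast_le (α := ℝ)).mpr hcount
      push_cast [Nat.cast_choose_two, hS] at this
      exact (mul_le_mul_of_nonneg_right hE (by nlinarith)).trans this
    have hgs : g * s = k ^ 2 := by rw [hs]; field_simp
    rw [div_le_iff₀ (by positivity)]
    calc (k : ℝ) * (k - 1) ^ 3 * g ^ 2 = 2 * g ^ 2 * ((k - 1) ^ 2 * (k * (k - 1) / 2)) := by ring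
      _ ≤ 2 * g ^ 2 * (n * (s * (s - 1) / 2)) := by gcongr
      _ = n * (g * s) ^ 2 - n * g ^ 2 * s := by ring
      _ ≤ n * (g * s) ^ 2 := sub_le_self _ (by positivity)
      _ = n * k ^ 4 := by rw [hgs]; ring
  · have hk5R : (5 : ℝ) ≤ k := by exact_mod_cast hk5
    -- `(k / (k - 1))³ ≤ (5 / 4)³ < 2`
    have hpoly : (k : ℝ) ^ 4 ≤ 2 * k * (k - 1) ^ 3 := by
      nlinarith [mul_nonneg (mul_nonneg (sub_nonneg.mpr hk5R) (sub_nonneg.mpr hk5R))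
        (sub_nonneg.mpr hk5R)]
    rw [div_le_div_iff₀ (by norm_num) (by positivity)]
    nlinarith [sq_nonneg g]
end

section
/- Conversely, in the label cover instance of the previous construction (built from an arbitrary partition V₁,…,V_k of V(G)), any multilabeling σ that covers all constraints, when mapped to the vertex set S := ⋃_i (σ(u_i) ∪ σ(v_i)) ⊆ V(G), yields a set S of size at most cost(σ) such that the number of edges of G with both endpoints in S is at least the number of unordered pairs {i,j} with i ≠ j, i.e., at least k(k−1)/2. -/
lemma sym2_mk_inf_sup {α : Type*} [LinearOrder α] (p : Sym2 α) :
    s(p.inf, p.sup) = p := Sym2.sortEquiv.left_inv p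

lemma sym2_inf_ne_sup {α : Type*} [LinearOrder α] (p : Sym2 α) (h : ¬p.IsDiag) :
    p.inf ≠ p.sup := by
  induction p using Sym2.ind with
  | _ a b =>
    simp only [Sym2.inf_mk, Sym2.sup_mk]
    intro hab
    exact h (by simp [Sym2.isDiag_iff_proj_eq, inf_eq_sup.mp hab])

/-- Soundness of the DkS-to-label-cover reduction.  Given a partition `part : V → Fin k`
of the vertices of `G` and a multilabeling `(σu, σv)` (labels of `u_i` and `v_i` being
vertices of part `i`) covering every constraint — i.e. for all `i ≠ j` some
`a ∈ σu i`, `b ∈ σv j` with `a` adjacent to `b` — the vertex set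
`S = ⋃ i, σu i ∪ σv i` has size at most the cost of the multilabeling and spans at
least `k(k−1)/2 = C(k,2)` edges of `G`. -/
theorem labeling_gives_dense_subset
    {V : Type*} [Fintype V] [DecidableEq V] (G : SimpleGraph V) [DecidableRel G.Adj]
    (k : ℕ) (part : V → Fin k)
    (σu σv : Fin k → Finset V)
    (hσu : ∀ i, ∀ a ∈ σu i, part a = i)
    (hσv : ∀ i, ∀ b ∈ σv i, part b = i)
    (hcov : ∀ i j : Fin k, i ≠ j → ∃ a ∈ σu i, ∃ b ∈ σv j, G.Adj a b) :
    (Finset.univ.biUnion fun i : Fin k => σu i ∪ σv i).card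
        ≤ ∑ i : Fin k, ((σu i).card + (σv i).card)
      ∧ k.choose 2 ≤
        (G.edgeFinset.filter
          (· ∈ (Finset.univ.biUnion fun i : Fin k => σu i ∪ σv i).sym2)).card := by
  classical
  set S := Finset.univ.biUnion fun i : Fin k => σu i ∪ σv i with hS
  constructor
  · calc S.card ≤ ∑ i : Fin k, (σu i ∪ σv i).card := Finset.card_biUnion_le
      _ ≤ ∑ i : Fin k, ((σu i).card + (σv i).card) :=
        Finset.sum_le_sum fun i _ => Finset.card_union_le _ _
  · -- For each non-diagonal `p : Sym2 (Fin k)`, pick an edge.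
    have key : ∀ p : {p : Sym2 (Fin k) // ¬p.IsDiag},
        ∃ e, e ∈ G.edgeFinset.filter (· ∈ S.sym2) ∧ Sym2.map part e = p.1 := by
      rintro ⟨p, hp⟩
      obtain ⟨a, ha, b, hb, hab⟩ := hcov p.inf p.sup (sym2_inf_ne_sup p hp)
      refine ⟨s(a, b), ?_, ?_⟩
      · simp only [Finset.mem_filter, SimpleGraph.mem_edgeFinset, Finset.mk_mem_sym2_iff]
        refine ⟨hab, ?_, ?_⟩
        · exact Finset.mem_biUnion.mpr ⟨p.inf, Finset.mem_univ _,
            Finset.mem_union_left _ ha⟩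
        · exact Finset.mem_biUnion.mpr ⟨p.sup, Finset.mem_univ _,
            Finset.mem_union_right _ hb⟩
      · simp only [Sym2.map_pair_eq, hσu _ _ ha, hσv _ _ hb]
        exact sym2_mk_inf_sup p
    choose f hf1 hf2 using key
    have hinj : Function.Injective f := by
      intro p q hpq
      apply Subtype.ext
      rw [← hf2 p, ← hf2 q, hpq]
    have h1 : Fintype.card {p : Sym2 (Fin k) // ¬p.IsDiag} ≤
        (G.edgeFinset.filter (· ∈ S.sym2)).card := by
      rw [← Fintype.card_coe (G.edgeFinset.filter (· ∈ S.sym2))]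
      exact Fintype.card_le_of_injective (fun p => ⟨f p, hf1 p⟩)
        (fun p q h => hinj (congrArg Subtype.val h))
    rwa [Sym2.card_subtype_not_diag, Fintype.card_fin] at h1
end
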